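/- Let g₁, g₂ : Ω → 𝔻 be nowhere-holomorphic C² functions on an open set Ω ⊆ ℂ satisfying (CP) and (Ge1), let f := −2i·conj(F) and φ := f·(1 + g₁g₂, i(1 − g₁g₂), g₁ − g₂, −i(g₁ + g₂)), and Λ² := 4|f|²(1+|g₁|²)(1+|g₂|²). Then at every point of Ω, (4/Λ²)·φ_z̄ equals the vector (1/((1+|g₁|²)(1+|g₂|²)))·( (1−|g₂|²)Im g₁ + (1−|g₁|²)Im g₂, −[(1−|g₂|²)Re g₁ + (1−|g₁|²)Re g₂], 2 Im(conj(g₁)g₂), −[1 − 2Re(conj(g₁)g₂) + |g₁|²|g₂|²] ) in ℝ⁴. -/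

import Mathlib

open Complex ComplexConjugate

/-- Wirtinger derivative `∂h/∂z = ½(∂h/∂u − i ∂h/∂v)` of a map `h : ℂ → ℂ`. -/
noncomputable def wz (h : ℂ → ℂ) (z : ℂ) : ℂ :=
  (1 / 2) * (fderiv ℝ h z 1 - Complex.I * fderiv ℝ h z Complex.I)

/-- Wirtinger derivative `∂h/∂z̄ = ½(∂h/∂u + i ∂h/∂v)` of a map `h : ℂ → ℂ`. -/
noncomputable def wzb (h : ℂ → ℂ) (z : ℂ) : ℂ :=
  (1 / 2) * (fderiv ℝ h z 1 + Complex.I * fderiv ℝ h z Complex.I)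

/-- Wirtinger derivative `∂x/∂z` of a real-valued map `x : ℂ → ℝ`. -/
noncomputable def wzR (x : ℂ → ℝ) (z : ℂ) : ℂ :=
  (1 / 2) * (((fderiv ℝ x z 1 : ℝ) : ℂ) - Complex.I * ((fderiv ℝ x z Complex.I : ℝ) : ℂ))

/-- The function `F` appearing in the compatibility condition (CP). -/
noncomputable def Ffun (g₁ g₂ : ℂ → ℂ) (z : ℂ) : ℂ :=
  wzb g₁ z / ((1 - g₁ z * conj (g₂ z)) * (1 + (Complex.normSq (g₁ z) : ℂ)))

/-- The compatibility condition (CP) at a point `z`. -/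
def CP (g₁ g₂ : ℂ → ℂ) (z : ℂ) : Prop :=
  Ffun g₁ g₂ z = wzb g₂ z / ((1 - conj (g₁ z) * g₂ z) * (1 + (Complex.normSq (g₂ z) : ℂ)))

/-- The integrability condition (Ge1) at a point `z`. -/
def Ge1 (g₁ g₂ : ℂ → ℂ) (z : ℂ) : Prop :=
  0 = wz (wzb g₁) z
      + (conj (g₂ z) / (1 - g₁ z * conj (g₂ z))
          - conj (g₁ z) / (1 + (Complex.normSq (g₁ z) : ℂ))) * wz g₁ z * wzb g₁ z
      + ((g₁ z + g₂ z) / ((1 - conj (g₁ z) * g₂ z) * (1 + (Complex.normSq (g₁ z) : ℂ))))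
          * (Complex.normSq (wzb g₁ z) : ℂ)

/-- The integrability condition (Ge2) at a point `z`. -/
def Ge2 (g₁ g₂ : ℂ → ℂ) (z : ℂ) : Prop :=
  0 = wz (wzb g₂) z
      + (conj (g₁ z) / (1 - conj (g₁ z) * g₂ z)
          - conj (g₂ z) / (1 + (Complex.normSq (g₂ z) : ℂ))) * wz g₂ z * wzb g₂ z
      + ((g₁ z + g₂ z) / ((1 - g₁ z * conj (g₂ z)) * (1 + (Complex.normSq (g₂ z) : ℂ))))
          * (Complex.normSq (wzb g₂ z) : ℂ)

/-- The function `f := −2i·conj(F)`. -/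
noncomputable def ffun (g₁ g₂ : ℂ → ℂ) (z : ℂ) : ℂ :=
  -2 * Complex.I * conj (Ffun g₁ g₂ z)

/-- The null curve `φ = f·(1 + g₁g₂, i(1 − g₁g₂), g₁ − g₂, −i(g₁ + g₂))`. -/
noncomputable def phi (g₁ g₂ : ℂ → ℂ) (z : ℂ) : Fin 4 → ℂ :=
  ![ffun g₁ g₂ z * (1 + g₁ z * g₂ z),
    ffun g₁ g₂ z * (Complex.I * (1 - g₁ z * g₂ z)),
    ffun g₁ g₂ z * (g₁ z - g₂ z),
    ffun g₁ g₂ z * (-Complex.I * (g₁ z + g₂ z))]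

/-- The conformal factor `Λ² = 4|f|²(1 + |g₁|²)(1 + |g₂|²)`. -/
noncomputable def lamSq (g₁ g₂ : ℂ → ℂ) (z : ℂ) : ℝ :=
  4 * Complex.normSq (ffun g₁ g₂ z) * (1 + Complex.normSq (g₁ z)) * (1 + Complex.normSq (g₂ z))


/-!
Everything reduces to one derivative. Differentiating `F = (g₁)_z̄ / ((1 - g₁ḡ₂)(1 + |g₁|²))`
in `z`, eliminating `(g₁)_{zz̄}` with (Ge1) and `(g₂)_z̄` with (CP), the terms in `(g₁)_z` cancel and
`F_z = -|F|² (g₁(1 - |g₂|²) + g₂(1 - |g₁|²))`. As `f = -2i F̄`, this gives `f_z̄`, while by (CP)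
both `(gⱼ)_z̄` are `F` times explicit factors. Hence `φ_z̄` is `|F|²` times a rational expression in
`g₁, g₂` and their conjugates; the factor `|F|²` cancels against `Λ²`, and what remains is an
algebraic identity.
-/

section Wirtinger

variable {u v : ℂ → ℂ} {z : ℂ}

theorem fderiv_conj_apply (hu : DifferentiableAt ℝ u z) (w : ℂ) :
    fderiv ℝ (fun x => conj (u x)) z w = conj (fderiv ℝ u z w) := by
  have h : HasFDerivAt (fun x => conj (u x))
      (conjCLE.toContinuousLinearMap.comp (fderiv ℝ u z)) z :=
    conjCLE.toContinuousLinearMap.hasFDerivAt.comp z hu.hasFDerivAt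
  rw [h.fderiv]
  rfl

@[fun_prop]
theorem DifferentiableAt.conj (hu : DifferentiableAt ℝ u z) :
    DifferentiableAt ℝ (fun x => conj (u x)) z :=
  (conjCLE.toContinuousLinearMap.hasFDerivAt.comp z hu.hasFDerivAt).differentiableAt

theorem wz_conj (hu : DifferentiableAt ℝ u z) :
    wz (fun w => conj (u w)) z = conj (wzb u z) := by
  simp only [wz, wzb, fderiv_conj_apply hu, map_mul, map_add, map_div₀, map_one, map_ofNat,
    conj_I]
  ring

theorem wzb_conj (hu : DifferentiableAt ℝ u z) :
    wzb (fun w => conj (u w)) z = conj (wz u z) := by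
  simp only [wz, wzb, fderiv_conj_apply hu, map_mul, map_sub, map_div₀, map_one, map_ofNat,
    conj_I]
  ring

theorem wz_const (c : ℂ) : wz (fun _ => c) z = 0 := by simp [wz]

theorem wzb_const (c : ℂ) : wzb (fun _ => c) z = 0 := by simp [wzb]

theorem wz_add (hu : DifferentiableAt ℝ u z) (hv : DifferentiableAt ℝ v z) :
    wz (fun w => u w + v w) z = wz u z + wz v z := by
  simp only [wz, fderiv_fun_add hu hv, add_apply]
  ring

theorem wzb_add (hu : DifferentiableAt ℝ u z) (hv : DifferentiableAt ℝ v z) :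
    wzb (fun w => u w + v w) z = wzb u z + wzb v z := by
  simp only [wzb, fderiv_fun_add hu hv, add_apply]
  ring

theorem wz_sub (hu : DifferentiableAt ℝ u z) (hv : DifferentiableAt ℝ v z) :
    wz (fun w => u w - v w) z = wz u z - wz v z := by
  simp only [wz, fderiv_fun_sub hu hv, sub_apply]
  ring

theorem wzb_sub (hu : DifferentiableAt ℝ u z) (hv : DifferentiableAt ℝ v z) :
    wzb (fun w => u w - v w) z = wzb u z - wzb v z := by
  simp only [wzb, fderiv_fun_sub hu hv, sub_apply]
  ring

theorem wz_mul (hu : DifferentiableAt ℝ u z) (hv : DifferentiableAt ℝ v z) :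
    wz (fun w => u w * v w) z = wz u z * v z + u z * wz v z := by
  simp only [wz, fderiv_fun_mul hu hv, add_apply, smul_apply, smul_eq_mul]
  ring

theorem wzb_mul (hu : DifferentiableAt ℝ u z) (hv : DifferentiableAt ℝ v z) :
    wzb (fun w => u w * v w) z = wzb u z * v z + u z * wzb v z := by
  simp only [wzb, fderiv_fun_mul hu hv, add_apply, smul_apply, smul_eq_mul]
  ring

theorem wz_div (hu : DifferentiableAt ℝ u z) (hv : DifferentiableAt ℝ v z) (hv0 : v z ≠ 0) :
    wz (fun w => u w / v w) z = (wz u z * v z - u z * wz v z) / v z ^ 2 := by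
  have hinv := (hasDerivAt_inv hv0).comp_hasFDerivAt z hv.hasFDerivAt
  have h : HasFDerivAt (fun w => u w / v w)
      (u z • (-(v z ^ 2)⁻¹ • fderiv ℝ v z) + (v z)⁻¹ • fderiv ℝ u z) z := by
    simpa only [div_eq_mul_inv, Function.comp_def] using hu.hasFDerivAt.fun_mul hinv
  simp only [wz, h.fderiv, add_apply, smul_apply, smul_eq_mul]
  field_simp
  ring

theorem ContDiffAt.differentiableAt_wzb (hu : ContDiffAt ℝ 2 u z) :
    DifferentiableAt ℝ (wzb u) z := by
  have hD : DifferentiableAt ℝ (fderiv ℝ u) z :=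
    (hu.fderiv_right (m := 1) (by norm_num)).differentiableAt one_ne_zero
  unfold wzb
  fun_prop

end Wirtinger

theorem one_sub_mul_conj_ne_zero {a b : ℂ} (ha : ‖a‖ < 1) (hb : ‖b‖ < 1) :
    1 - a * conj b ≠ 0 := by
  have hab : ‖a * conj b‖ < 1 := by
    rw [norm_mul, norm_conj]
    exact mul_lt_one_of_nonneg_of_lt_one_left (norm_nonneg a) ha hb.le
  rw [sub_ne_zero]
  rintro h
  simp [← h] at hab

theorem one_sub_conj_mul_ne_zero {a b : ℂ} (h : 1 - a * conj b ≠ 0) : 1 - conj a * b ≠ 0 := by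
  simpa using (map_ne_zero (starRingEnd ℂ)).2 h

theorem one_add_normSq_ne_zero (a : ℂ) : 1 + (normSq a : ℂ) ≠ 0 := by
  exact_mod_cast (add_pos_of_pos_of_nonneg one_pos (normSq_nonneg a)).ne'

def nullVec (a b : ℂ) : Fin 4 → ℂ :=
  ![1 + a * b, I * (1 - a * b), a - b, -I * (a + b)]

def nullVecDeriv (a b p q : ℂ) : Fin 4 → ℂ :=
  ![p * b + a * q, -I * (p * b + a * q), p - q, -I * (p + q)]

noncomputable def meanCurvatureVec (a b : ℂ) (k : Fin 4) : ℝ :=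
  1 / ((1 + normSq a) * (1 + normSq b)) *
    ![(1 - normSq b) * a.im + (1 - normSq a) * b.im,
      -((1 - normSq b) * a.re + (1 - normSq a) * b.re),
      2 * (conj a * b).im,
      -(1 - 2 * (conj a * b).re + normSq a * normSq b)] k

theorem meanCurvatureVec_eq {a b F p q : ℂ} (hF : F ≠ 0)
    (hp : p = F * ((1 - a * conj b) * (1 + normSq a)))
    (hq : q = F * ((1 - conj a * b) * (1 + normSq b))) (k : Fin 4) :
    4 / ((16 * normSq F * (1 + normSq a) * (1 + normSq b) : ℝ) : ℂ) *
      (-2 * I * conj (-(normSq F : ℂ) * (a * (1 - normSq b) + b * (1 - normSq a))) * nullVec a b k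
        + -2 * I * conj F * nullVecDeriv a b p q k) = meanCurvatureVec a b k := by
  have hFc : conj F ≠ 0 := (map_ne_zero _).2 hF
  have ha : 1 + a * conj a ≠ 0 := by rw [mul_conj]; exact one_add_normSq_ne_zero a
  have hb : 1 + b * conj b ≠ 0 := by rw [mul_conj]; exact one_add_normSq_ne_zero b
  subst hp hq
  fin_cases k <;>
  · simp only [nullVec, nullVecDeriv, meanCurvatureVec, Fin.reduceFinMk, Fin.zero_eta, Fin.mk_one,
      Matrix.cons_val]
    push_cast
    simp only [re_eq_add_conj, im_eq_sub_conj, ← mul_conj, map_mul, map_sub, map_add, map_one,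
      map_neg, conj_conj]
    field_simp
    ring_nf
    simp only [I_sq]
    ring

section GaussMap

variable {g₁ g₂ : ℂ → ℂ} {z : ℂ}

theorem Ffun_eq_div :
    Ffun g₁ g₂ = fun w => wzb g₁ w / ((1 - g₁ w * conj (g₂ w)) * (1 + g₁ w * conj (g₁ w))) := by
  funext w
  rw [Ffun, mul_conj]

theorem Ffun_ne_zero (hnh : wzb g₁ z ≠ 0) (hden : 1 - g₁ z * conj (g₂ z) ≠ 0) :
    Ffun g₁ g₂ z ≠ 0 :=
  div_ne_zero hnh (mul_ne_zero hden (one_add_normSq_ne_zero _))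

theorem wzb_left_eq_Ffun_mul (hden : 1 - g₁ z * conj (g₂ z) ≠ 0) :
    wzb g₁ z = Ffun g₁ g₂ z * ((1 - g₁ z * conj (g₂ z)) * (1 + normSq (g₁ z))) :=
  (div_mul_cancel₀ _ (mul_ne_zero hden (one_add_normSq_ne_zero _))).symm

theorem wzb_right_eq_Ffun_mul (hden : 1 - g₁ z * conj (g₂ z) ≠ 0) (hCP : CP g₁ g₂ z) :
    wzb g₂ z = Ffun g₁ g₂ z * ((1 - conj (g₁ z) * g₂ z) * (1 + normSq (g₂ z))) := by
  rw [hCP, div_mul_cancel₀ _ (mul_ne_zero (one_sub_conj_mul_ne_zero hden)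
    (one_add_normSq_ne_zero _))]

theorem differentiableAt_Ffun (h₁ : DifferentiableAt ℝ g₁ z) (h₂ : DifferentiableAt ℝ g₂ z)
    (hw : DifferentiableAt ℝ (wzb g₁) z) (hden : 1 - g₁ z * conj (g₂ z) ≠ 0) :
    DifferentiableAt ℝ (Ffun g₁ g₂) z := by
  have hD : (1 - g₁ z * conj (g₂ z)) * (1 + g₁ z * conj (g₁ z)) ≠ 0 := by
    rw [mul_conj]
    exact mul_ne_zero hden (one_add_normSq_ne_zero _)
  rw [Ffun_eq_div]
  simp only [div_eq_mul_inv]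
  fun_prop (disch := exact hD)

theorem wz_Ffun (h₁ : DifferentiableAt ℝ g₁ z) (h₂ : DifferentiableAt ℝ g₂ z)
    (hw : DifferentiableAt ℝ (wzb g₁) z) (hden : 1 - g₁ z * conj (g₂ z) ≠ 0)
    (hCP : CP g₁ g₂ z) (hGe1 : Ge1 g₁ g₂ z) :
    wz (Ffun g₁ g₂) z = -(normSq (Ffun g₁ g₂ z) : ℂ) *
      (g₁ z * (1 - normSq (g₂ z)) + g₂ z * (1 - normSq (g₁ z))) := by
  have hc₁ : 1 + g₁ z * conj (g₁ z) ≠ 0 := by rw [mul_conj]; exact one_add_normSq_ne_zero _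
  have hden_comm : 1 - conj (g₂ z) * g₁ z ≠ 0 := by rwa [mul_comm]
  have hden_conj := one_sub_conj_mul_ne_zero hden
  have hD := mul_ne_zero hden hc₁
  have hQ := congrArg conj (wzb_right_eq_Ffun_mul hden hCP)
  rw [Ge1, add_assoc, eq_comm, add_eq_zero_iff_eq_neg] at hGe1
  rw [Ffun_eq_div] at hQ ⊢
  rw [wz_div hw (by fun_prop) hD]
  simp (disch := fun_prop) only [wz_mul, wz_sub, wz_add, wz_const, wz_conj]
  simp only [← mul_conj] at hGe1 hQ ⊢
  rw [hGe1, hQ]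
  simp only [map_div₀, map_mul, map_sub, map_add, map_one, conj_conj]
  field_simp
  ring

theorem wzb_ffun (hF : DifferentiableAt ℝ (Ffun g₁ g₂) z) :
    wzb (ffun g₁ g₂) z = -2 * I * conj (wz (Ffun g₁ g₂) z) := by
  change wzb (fun w => -2 * I * conj (Ffun g₁ g₂ w)) z = _
  rw [wzb_mul (by fun_prop) (by fun_prop), wzb_const, wzb_conj hF]
  ring

theorem wzb_phi_apply (hf : DifferentiableAt ℝ (ffun g₁ g₂) z) (h₁ : DifferentiableAt ℝ g₁ z)
    (h₂ : DifferentiableAt ℝ g₂ z) (k : Fin 4) :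
    wzb (fun w => phi g₁ g₂ w k) z = wzb (ffun g₁ g₂) z * nullVec (g₁ z) (g₂ z) k +
      ffun g₁ g₂ z * nullVecDeriv (g₁ z) (g₂ z) (wzb g₁ z) (wzb g₂ z) k := by
  fin_cases k <;>
    simp (disch := fun_prop) only [phi, nullVec, nullVecDeriv, Fin.reduceFinMk, Fin.zero_eta,
      Fin.mk_one, Matrix.cons_val, wzb_mul, wzb_add, wzb_sub, wzb_const] <;>
    ring

theorem lamSq_eq : lamSq g₁ g₂ z =
    16 * normSq (Ffun g₁ g₂ z) * (1 + normSq (g₁ z)) * (1 + normSq (g₂ z)) := by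
  simp only [lamSq, ffun, normSq_mul, normSq_neg, normSq_I, normSq_conj, normSq_ofNat]
  ring

end GaussMap

theorem mean_curvature_formula_general
    (Ω : Set ℂ) (hΩ : IsOpen Ω) (g₁ g₂ : ℂ → ℂ)
    (hg₁ : ContDiffOn ℝ 2 g₁ Ω) (hg₂ : ContDiffOn ℝ 2 g₂ Ω)
    (hd₁ : ∀ z ∈ Ω, ‖g₁ z‖ < 1) (hd₂ : ∀ z ∈ Ω, ‖g₂ z‖ < 1)
    (hnh₁ : ∀ z ∈ Ω, wzb g₁ z ≠ 0)
    (hCP : ∀ z ∈ Ω, CP g₁ g₂ z)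
    (hGe1 : ∀ z ∈ Ω, Ge1 g₁ g₂ z) :
    ∀ z ∈ Ω, ∀ k : Fin 4,
      (4 / (lamSq g₁ g₂ z : ℂ)) * wzb (fun w => phi g₁ g₂ w k) z
        = (((1 / ((1 + Complex.normSq (g₁ z)) * (1 + Complex.normSq (g₂ z))))
            * (![(1 - Complex.normSq (g₂ z)) * (g₁ z).im
                  + (1 - Complex.normSq (g₁ z)) * (g₂ z).im,
                -((1 - Complex.normSq (g₂ z)) * (g₁ z).re
                  + (1 - Complex.normSq (g₁ z)) * (g₂ z).re),
                2 * (conj (g₁ z) * g₂ z).im,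
                -(1 - 2 * (conj (g₁ z) * g₂ z).re
                  + Complex.normSq (g₁ z) * Complex.normSq (g₂ z))] k) : ℝ) : ℂ) := by
  intro z hz k
  have hC₁ : ContDiffAt ℝ 2 g₁ z := hg₁.contDiffAt (hΩ.mem_nhds hz)
  have h₁ : DifferentiableAt ℝ g₁ z := hC₁.differentiableAt two_ne_zero
  have h₂ : DifferentiableAt ℝ g₂ z :=
    (hg₂.contDiffAt (hΩ.mem_nhds hz)).differentiableAt two_ne_zero
  have hw : DifferentiableAt ℝ (wzb g₁) z := hC₁.differentiableAt_wzb
  have hden := one_sub_mul_conj_ne_zero (hd₁ z hz) (hd₂ z hz)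
  have hF := differentiableAt_Ffun h₁ h₂ hw hden
  have hf : DifferentiableAt ℝ (ffun g₁ g₂) z := by unfold ffun; fun_prop
  rw [wzb_phi_apply hf h₁ h₂, wzb_ffun hF, wz_Ffun h₁ h₂ hw hden (hCP z hz) (hGe1 z hz),
    lamSq_eq]
  exact meanCurvatureVec_eq (Ffun_ne_zero (hnh₁ z hz) hden) (wzb_left_eq_Ffun_mul hden)
    (wzb_right_eq_Ffun_mul hden (hCP z hz)) k

/-- **(Step E, the mean curvature vector in terms of the Gauss map).** Under (CP) and
(Ge1), `(4/Λ²)·φ_z̄` equals the real vector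
`(1/((1+|g₁|²)(1+|g₂|²)))·((1−|g₂|²)Im g₁ + (1−|g₁|²)Im g₂,
 −[(1−|g₂|²)Re g₁ + (1−|g₁|²)Re g₂], 2 Im(conj(g₁)g₂),
 −[1 − 2Re(conj(g₁)g₂) + |g₁|²|g₂|²])`. -/
theorem mean_curvature_formula
    (Ω : Set ℂ) (hΩ : IsOpen Ω) (g₁ g₂ : ℂ → ℂ)
    (hg₁ : ContDiffOn ℝ 2 g₁ Ω) (hg₂ : ContDiffOn ℝ 2 g₂ Ω)
    (hd₁ : ∀ z ∈ Ω, ‖g₁ z‖ < 1) (hd₂ : ∀ z ∈ Ω, ‖g₂ z‖ < 1)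
    (hnh₁ : ∀ z ∈ Ω, wzb g₁ z ≠ 0) (hnh₂ : ∀ z ∈ Ω, wzb g₂ z ≠ 0)
    (hCP : ∀ z ∈ Ω, CP g₁ g₂ z)
    (hGe1 : ∀ z ∈ Ω, Ge1 g₁ g₂ z) :
    ∀ z ∈ Ω, ∀ k : Fin 4,
      (4 / (lamSq g₁ g₂ z : ℂ)) * wzb (fun w => phi g₁ g₂ w k) z
        = (((1 / ((1 + Complex.normSq (g₁ z)) * (1 + Complex.normSq (g₂ z))))
            * (![(1 - Complex.normSq (g₂ z)) * (g₁ z).im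
                  + (1 - Complex.normSq (g₁ z)) * (g₂ z).im,
                -((1 - Complex.normSq (g₂ z)) * (g₁ z).re
                  + (1 - Complex.normSq (g₁ z)) * (g₂ z).re),
                2 * (conj (g₁ z) * g₂ z).im,
                -(1 - 2 * (conj (g₁ z) * g₂ z).re
                  + Complex.normSq (g₁ z) * Complex.normSq (g₂ z))] k) : ℝ) : ℂ) :=
  mean_curvature_formula_general Ω hΩ g₁ g₂ hg₁ hg₂ hd₁ hd₂ hnh₁ hCP hGe1
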